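/- Let δ ≥ 0, s > s₀ > 0, and let G be a homogeneous polynomial Hamiltonian G(u) = Σ_{(ℓ,σ)} G^{ℓ,σ} u_{ℓ_1}^{σ_1}⋯u_{ℓ_{2q}}^{σ_{2q}} whose coefficients are real and satisfy |G^{ℓ,σ}| ≤ C ⟨ℓ_3^*⟩^{2δ}/⟨ℓ_1^*⟩^{δ}, where the sum is over (ℓ,σ) satisfying the zero momentum condition σ_1ℓ_1+⋯+σ_{2q}ℓ_{2q}=0. If δ ≤ (s−s₀)/2, then there is a constant C' = C'(q, C, s, s₀) such that ‖∇G(u)‖_{ℓ¹_{s+δ}} ≤ C' ‖u‖_{ℓ¹_s}^{2q−1} for all u ∈ ℓ¹_s. -/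

import Mathlib

set_option maxHeartbeats 1600000


noncomputable def jap (n : ℤ) : ℝ := max 1 |(n : ℝ)|

def sgn (b : Bool) : ℤ := if b then 1 else -1

/-- `u_k^{σ}` with the convention `u_k^{-1} = conj u_k`. -/
noncomputable def pw (u : ℤ →₀ ℂ) (k : ℤ) (b : Bool) : ℂ :=
  if b then u k else (starRingEnd ℂ) (u k)

/-- The `k`-th component of the `ℓ²` gradient of the homogeneous Hamiltonian
with coefficients `Gc`: the sum over monomials and positions `i` carrying a
factor `conj (u_k)` of the coefficient times the remaining factors. -/
noncomputable def gradComp (q : ℕ)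
    (Gc : (Fin (2 * q) → ℤ) → (Fin (2 * q) → Bool) → ℝ) (u : ℤ →₀ ℂ) (k : ℤ) : ℂ :=
  ∑' P : (Fin (2 * q) → ℤ) × (Fin (2 * q) → Bool),
    ((Gc P.1 P.2 : ℝ) : ℂ) *
      ∑ i : Fin (2 * q),
        if P.2 i = false ∧ P.1 i = k then
          ∏ j ∈ Finset.univ.erase i, pw u (P.1 j) (P.2 j)
        else 0

lemma one_le_jap (n : ℤ) : 1 ≤ jap n := le_max_left _ _
lemma jap_pos (n : ℤ) : 0 < jap n := lt_of_lt_of_le one_pos (one_le_jap n)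
lemma abs_le_jap (n : ℤ) : |(n : ℝ)| ≤ jap n := le_max_right _ _
lemma jap_mono {a b : ℤ} (h : |a| ≤ |b|) : jap a ≤ jap b := by
  have h' : |(a : ℝ)| ≤ |(b : ℝ)| := by
    rw [← Int.cast_abs, ← Int.cast_abs]; exact_mod_cast h
  exact max_le_max le_rfl h'

lemma sum_le_sum_inj {α β : Type*} [DecidableEq β] (s : Finset α) (t : Finset β)
    (e : α → β) (f : α → ℝ) (g : β → ℝ)
    (hg : ∀ y, 0 ≤ g y)
    (hle : ∀ x ∈ s, f x ≤ g (e x))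
    (hmem : ∀ x ∈ s, f x ≠ 0 → e x ∈ t)
    (hinj : ∀ x ∈ s, ∀ x' ∈ s, f x ≠ 0 → f x' ≠ 0 → e x = e x' → x = x') :
    ∑ x ∈ s, f x ≤ ∑ y ∈ t, g y := by
  classical
  have h1 : ∑ x ∈ s, f x = ∑ x ∈ s.filter (fun x => f x ≠ 0), f x :=
    (Finset.sum_filter_ne_zero s).symm
  rw [h1]
  have h2 : ∑ x ∈ s.filter (fun x => f x ≠ 0), f x
      ≤ ∑ x ∈ s.filter (fun x => f x ≠ 0), g (e x) :=
    Finset.sum_le_sum fun x hx => hle x (Finset.mem_filter.1 hx).1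
  refine h2.trans ?_
  rw [← Finset.sum_image (g := e) (f := fun y => g y) ?_]
  · apply Finset.sum_le_sum_of_subset_of_nonneg
    · intro y hy
      obtain ⟨x, hx, rfl⟩ := Finset.mem_image.1 hy
      exact hmem x (Finset.mem_filter.1 hx).1 (Finset.mem_filter.1 hx).2
    · intro y _ _; exact hg y
  · intro x hx x' hx' hxx'
    exact hinj x (Finset.mem_filter.1 hx).1 x' (Finset.mem_filter.1 hx').1
      (Finset.mem_filter.1 hx).2 (Finset.mem_filter.1 hx').2 hxx'

lemma key_bound (q : ℕ) (hq : 2 ≤ q) (δ s C : ℝ)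
    (hδ : 0 ≤ δ) (hs : 0 < s) (h2δ : 2 * δ ≤ s) (hC : 0 < C)
    (Gc : (Fin (2 * q) → ℤ) → (Fin (2 * q) → Bool) → ℝ)
    (hmom : ∀ ℓ σ, Gc ℓ σ ≠ 0 → (∑ i, sgn (σ i) * ℓ i) = 0)
    (hbound : ∀ ℓ σ (φ : Equiv.Perm (Fin (2 * q))),
      (∀ i j : Fin (2 * q), i ≤ j → |ℓ (φ j)| ≤ |ℓ (φ i)|) →
      |Gc ℓ σ| ≤ C * jap (ℓ (φ ⟨2, by have _h := hq; omega⟩)) ^ (2 * δ) /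
        jap (ℓ (φ ⟨0, by have _h := hq; omega⟩)) ^ δ)
    (ℓ : Fin (2 * q) → ℤ) (σ : Fin (2 * q) → Bool) (i : Fin (2 * q)) :
    jap (ℓ i) ^ (s + δ) * |Gc ℓ σ| ≤
      (C * (2 * (q : ℝ)) ^ s) * ∏ j ∈ Finset.univ.erase i, jap (ℓ j) ^ s := by
  classical
  have hRnn : (0:ℝ) ≤ ∏ j ∈ Finset.univ.erase i, jap (ℓ j) ^ s :=
    Finset.prod_nonneg fun j _ => Real.rpow_nonneg (jap_pos _).le _
  have hqR : (0:ℝ) < 2 * (q:ℝ) := by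
    have : (0:ℝ) < (q:ℝ) := by exact_mod_cast (by omega : 0 < q)
    linarith
  rcases eq_or_ne (Gc ℓ σ) 0 with h0 | h0
  · rw [h0, abs_zero, mul_zero]
    exact mul_nonneg (mul_pos hC (Real.rpow_pos_of_pos hqR s)).le hRnn
  have hmom' := hmom ℓ σ h0
  set φ : Equiv.Perm (Fin (2 * q)) := Tuple.sort (fun j => -|ℓ j|) with hφ
  have hsorted : ∀ a b : Fin (2 * q), a ≤ b → |ℓ (φ b)| ≤ |ℓ (φ a)| := by
    intro a b hab
    have := Tuple.monotone_sort (fun j => -|ℓ j|) hab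
    simpa using this
  have h2q4 : 2 ≤ 2 * q := by omega
  set i0 : Fin (2 * q) := ⟨0, by omega⟩ with hi0
  set i1 : Fin (2 * q) := ⟨1, by omega⟩ with hi1
  set i2 : Fin (2 * q) := ⟨2, by omega⟩ with hi2
  set a := jap (ℓ (φ i0)) with ha
  set b := jap (ℓ (φ i1)) with hb
  set c := jap (ℓ (φ i2)) with hc
  have hba : b ≤ a := jap_mono (hsorted i0 i1 (by simp [hi0, hi1]))
  have hcb : c ≤ b := jap_mono (hsorted i1 i2 (by simp [hi1, hi2, Fin.le_def]))
  have hapos : (0:ℝ) < a := jap_pos _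
  have hbpos : (0:ℝ) < b := jap_pos _
  have hcpos : (0:ℝ) < c := jap_pos _
  -- step A : jap (ℓ i) ≤ a
  have hstepA : jap (ℓ i) ≤ a := by
    have h1 : |ℓ (φ (φ.symm i))| ≤ |ℓ (φ i0)| :=
      hsorted i0 (φ.symm i) (by simp [hi0, Fin.le_def])
    rw [Equiv.apply_symm_apply] at h1
    exact jap_mono h1
  -- step B : a ≤ 2q * b
  have hstepB : a ≤ (2 * (q:ℝ)) * b := by
    have hsplit : sgn (σ (φ i0)) * ℓ (φ i0)
        + ∑ j ∈ Finset.univ.erase (φ i0), sgn (σ j) * ℓ j = 0 := by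
      have h := Finset.add_sum_erase Finset.univ (fun j => sgn (σ j) * ℓ j)
        (Finset.mem_univ (φ i0))
      rw [h]; exact hmom'
    have habs_sgn : ∀ j, |sgn (σ j) * ℓ j| = |ℓ j| := by
      intro j; rcases Bool.eq_false_or_eq_true (σ j) with h | h <;> simp [sgn, h]
    have hterm : ∀ j ∈ Finset.univ.erase (φ i0), |ℓ j| ≤ |ℓ (φ i1)| := by
      intro j hj
      have hne : j ≠ φ i0 := (Finset.mem_erase.1 hj).1
      have hsymm : i1 ≤ φ.symm j := by
        have : φ.symm j ≠ i0 := fun h => hne (by rw [← h, Equiv.apply_symm_apply])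
        have : (φ.symm j).1 ≠ 0 := fun h => this (Fin.ext (by simpa [hi0] using h))
        simp [hi1, Fin.le_def]; omega
      have := hsorted i1 (φ.symm j) hsymm
      rwa [Equiv.apply_symm_apply] at this
    have hZ : |ℓ (φ i0)| ≤ (2 * q - 1 : ℤ) * |ℓ (φ i1)| := by
      have h1 : |ℓ (φ i0)| = |∑ j ∈ Finset.univ.erase (φ i0), sgn (σ j) * ℓ j| := by
        rw [← habs_sgn (φ i0)]
        have : sgn (σ (φ i0)) * ℓ (φ i0)
            = -∑ j ∈ Finset.univ.erase (φ i0), sgn (σ j) * ℓ j := by linarith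
        rw [this, abs_neg]
      calc |ℓ (φ i0)| = _ := h1
        _ ≤ ∑ j ∈ Finset.univ.erase (φ i0), |sgn (σ j) * ℓ j| :=
            Finset.abs_sum_le_sum_abs _ _
        _ ≤ ∑ j ∈ Finset.univ.erase (φ i0), |ℓ (φ i1)| := by
            apply Finset.sum_le_sum
            intro j hj; rw [habs_sgn]; exact hterm j hj
        _ = (2 * q - 1 : ℤ) * |ℓ (φ i1)| := by
            rw [Finset.sum_const, Finset.card_erase_of_mem (Finset.mem_univ _)]
            simp [mul_comm]
            omega
    have hZR : |(ℓ (φ i0) : ℝ)| ≤ (2 * (q:ℝ) - 1) * |(ℓ (φ i1) : ℝ)| := by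
      have := hZ
      rw [← Int.cast_abs, ← Int.cast_abs]
      push_cast
      exact_mod_cast (by exact_mod_cast hZ : ((|ℓ (φ i0)| : ℤ) : ℝ) ≤ ((2 * q - 1 : ℤ) * |ℓ (φ i1)| : ℤ))
    have hq2 : (2:ℝ) ≤ (q:ℝ) := by exact_mod_cast hq
    apply max_le
    · nlinarith [one_le_jap (ℓ (φ i1))]
    · have h2 : |(ℓ (φ i1) : ℝ)| ≤ b := abs_le_jap _
      nlinarith [abs_nonneg ((ℓ (φ i0) : ℝ)), abs_nonneg ((ℓ (φ i1) : ℝ)), hbpos.le]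
  -- coefficient bound
  have hGb : |Gc ℓ σ| ≤ C * c ^ (2 * δ) / a ^ δ := hbound ℓ σ φ hsorted
  -- two distinct indices avoiding i
  have hinjφ : Function.Injective φ := φ.injective
  have hne01 : φ i0 ≠ φ i1 := fun h => by
    have := hinjφ h; simp [hi0, hi1, Fin.ext_iff] at this
  have hne02 : φ i0 ≠ φ i2 := fun h => by
    have := hinjφ h; simp [hi0, hi2, Fin.ext_iff] at this
  have hne12 : φ i1 ≠ φ i2 := fun h => by
    have := hinjφ h; simp [hi1, hi2, Fin.ext_iff] at this
  obtain ⟨j1, j2, hj12, hj1i, hj2i, hbj1, hcj2⟩ :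
      ∃ j1 j2 : Fin (2 * q), j1 ≠ j2 ∧ j1 ≠ i ∧ j2 ≠ i ∧
        b ≤ jap (ℓ j1) ∧ c ≤ jap (ℓ j2) := by
    by_cases h0i : φ i0 = i
    · refine ⟨φ i1, φ i2, hne12, ?_, ?_, le_rfl, le_rfl⟩
      · rw [← h0i]; exact fun h => hne01 h.symm
      · rw [← h0i]; exact fun h => hne02 h.symm
    · by_cases h1i : φ i1 = i
      · refine ⟨φ i0, φ i2, hne02, h0i, ?_, hba, le_rfl⟩
        rw [← h1i]; exact fun h => hne12 h.symm
      · exact ⟨φ i0, φ i1, hne01, h0i, h1i, hba, hcb⟩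
  have hprod : b ^ s * c ^ (2 * δ) ≤ ∏ j ∈ Finset.univ.erase i, jap (ℓ j) ^ s := by
    have hsub : ({j1, j2} : Finset (Fin (2 * q))) ⊆ Finset.univ.erase i := by
      intro x hx
      rcases Finset.mem_insert.1 hx with rfl | hx
      · exact Finset.mem_erase.2 ⟨hj1i, Finset.mem_univ _⟩
      · rw [Finset.mem_singleton.1 hx]
        exact Finset.mem_erase.2 ⟨hj2i, Finset.mem_univ _⟩
    have hmono : ∏ j ∈ ({j1, j2} : Finset (Fin (2 * q))), jap (ℓ j) ^ s
        ≤ ∏ j ∈ Finset.univ.erase i, jap (ℓ j) ^ s := by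
      rw [← Finset.prod_sdiff hsub]
      apply le_mul_of_one_le_left
      · exact Finset.prod_nonneg fun j _ => Real.rpow_nonneg (jap_pos _).le _
      · calc (1:ℝ) = ∏ _j ∈ Finset.univ.erase i \ ({j1, j2} : Finset (Fin (2 * q))), 1 :=
              (Finset.prod_const_one).symm
          _ ≤ _ := Finset.prod_le_prod (fun j _ => zero_le_one)
              (fun j _ => Real.one_le_rpow (one_le_jap _) hs.le)
    calc b ^ s * c ^ (2 * δ)
        ≤ jap (ℓ j1) ^ s * jap (ℓ j2) ^ s := by
          apply mul_le_mul
          · exact Real.rpow_le_rpow hbpos.le hbj1 hs.le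
          · calc c ^ (2 * δ) ≤ jap (ℓ j2) ^ (2 * δ) :=
                Real.rpow_le_rpow hcpos.le hcj2 (by linarith)
              _ ≤ jap (ℓ j2) ^ s :=
                Real.rpow_le_rpow_of_exponent_le (one_le_jap _) h2δ
          · exact Real.rpow_nonneg hcpos.le _
          · exact Real.rpow_nonneg (jap_pos _).le _
        _ = ∏ j ∈ ({j1, j2} : Finset (Fin (2 * q))), jap (ℓ j) ^ s := by
            rw [Finset.prod_pair hj12]
        _ ≤ _ := hmono
  -- final chain
  have h1 : jap (ℓ i) ^ (s + δ) * |Gc ℓ σ| ≤ a ^ (s + δ) * (C * c ^ (2 * δ) / a ^ δ) := by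
    apply mul_le_mul
    · exact Real.rpow_le_rpow (jap_pos _).le hstepA (by linarith)
    · exact hGb
    · exact abs_nonneg _
    · exact Real.rpow_nonneg hapos.le _
  have h2 : a ^ (s + δ) * (C * c ^ (2 * δ) / a ^ δ) = C * (a ^ s * c ^ (2 * δ)) := by
    rw [Real.rpow_add hapos]
    field_simp
  have h3 : a ^ s ≤ (2 * (q:ℝ)) ^ s * b ^ s := by
    rw [← Real.mul_rpow hqR.le hbpos.le]
    exact Real.rpow_le_rpow hapos.le hstepB hs.le
  calc jap (ℓ i) ^ (s + δ) * |Gc ℓ σ| ≤ a ^ (s + δ) * (C * c ^ (2 * δ) / a ^ δ) := h1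
    _ = C * (a ^ s * c ^ (2 * δ)) := h2
    _ ≤ C * (((2 * (q:ℝ)) ^ s * b ^ s) * c ^ (2 * δ)) := by
        apply mul_le_mul_of_nonneg_left _ hC.le
        exact mul_le_mul_of_nonneg_right h3 (Real.rpow_nonneg hcpos.le _)
    _ = (C * (2 * (q:ℝ)) ^ s) * (b ^ s * c ^ (2 * δ)) := by ring
    _ ≤ (C * (2 * (q:ℝ)) ^ s) * ∏ j ∈ Finset.univ.erase i, jap (ℓ j) ^ s := by
        apply mul_le_mul_of_nonneg_left hprod
        exact (mul_pos hC (Real.rpow_pos_of_pos hqR s)).le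

lemma norm_pw (u : ℤ →₀ ℂ) (k : ℤ) (b : Bool) : ‖pw u k b‖ = ‖u k‖ := by
  cases b <;> simp [pw]

lemma pw_eq_zero (u : ℤ →₀ ℂ) (k : ℤ) (b : Bool) (h : u k = 0) : pw u k b = 0 := by
  cases b <;> simp [pw, h]

lemma gradComp_eq (q : ℕ) (Gc : (Fin (2 * q) → ℤ) → (Fin (2 * q) → Bool) → ℝ)
    (u : ℤ →₀ ℂ) (k : ℤ) :
    gradComp q Gc u k =
      ∑ P ∈ (Fintype.piFinset fun _ : Fin (2 * q) => insert k u.support) ×ˢ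
          (Finset.univ : Finset (Fin (2 * q) → Bool)),
        ((Gc P.1 P.2 : ℝ) : ℂ) *
          ∑ i : Fin (2 * q), if P.2 i = false ∧ P.1 i = k then
            ∏ j ∈ Finset.univ.erase i, pw u (P.1 j) (P.2 j) else 0 := by
  classical
  apply tsum_eq_sum
  intro P hP
  have hP1 : ¬ ∀ j, P.1 j ∈ insert k u.support := by
    intro hall
    exact hP (Finset.mem_product.2 ⟨Fintype.mem_piFinset.2 hall, Finset.mem_univ _⟩)
  push_neg at hP1
  obtain ⟨j0, hj0⟩ := hP1
  have hsum0 : ∀ i : Fin (2 * q), (if P.2 i = false ∧ P.1 i = k then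
      ∏ j ∈ Finset.univ.erase i, pw u (P.1 j) (P.2 j) else 0) = 0 := by
    intro i
    split
    · next hcond =>
      have hji : j0 ≠ i := by
        intro hrfl
        rw [hrfl] at hj0
        exact hj0 (by rw [hcond.2]; exact Finset.mem_insert_self _ _)
      apply Finset.prod_eq_zero (Finset.mem_erase.2 ⟨hji, Finset.mem_univ _⟩)
      apply pw_eq_zero
      exact Finsupp.notMem_support_iff.1 (fun hmem => hj0 (Finset.mem_insert_of_mem hmem))
    · rfl
  rw [Finset.sum_congr rfl (fun i _ => hsum0 i)]
  simp

set_option maxHeartbeats 1600000 in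
/-- a homogeneous Hamiltonian of degree `2q` with zero momentum
and coefficients bounded by `C⟨ℓ_3^*⟩^{2δ}/⟨ℓ_1^*⟩^δ` has a `δ`-smoothing
gradient: `‖∇G(u)‖_{ℓ¹_{s+δ}} ≤ C' ‖u‖_{ℓ¹_s}^{2q-1}`. -/
theorem stmt14 (q : ℕ) (hq : 2 ≤ q) (δ s s₀ C : ℝ)
    (hδ : 0 ≤ δ) (hs₀ : 0 < s₀) (hss₀ : s₀ < s) (hδs : δ ≤ (s - s₀) / 2)
    (habs : 2 * δ + s₀ ≤ s) (hC : 0 < C) :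
    ∃ C' : ℝ, 0 < C' ∧
      ∀ Gc : (Fin (2 * q) → ℤ) → (Fin (2 * q) → Bool) → ℝ,
        (∀ ℓ σ, Gc ℓ σ ≠ 0 → (∑ i, sgn (σ i) * ℓ i) = 0) →
        (∀ ℓ σ (φ : Equiv.Perm (Fin (2 * q))),
          (∀ i j : Fin (2 * q), i ≤ j → |ℓ (φ j)| ≤ |ℓ (φ i)|) →
          |Gc ℓ σ| ≤ C * jap (ℓ (φ ⟨2, by omega⟩)) ^ (2 * δ) /
            jap (ℓ (φ ⟨0, by omega⟩)) ^ δ) →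
        ∀ u : ℤ →₀ ℂ,
          (∑' k : ℤ, jap k ^ (s + δ) * ‖gradComp q Gc u k‖) ≤
            C' * (∑' k : ℤ, jap k ^ s * ‖u k‖) ^ (2 * q - 1) := by
  classical
  have hqR : (0:ℝ) < (q:ℝ) := by exact_mod_cast (by omega : 0 < q)
  have hq2R : (0:ℝ) < 2 * (q:ℝ) := by linarith
  have hs : 0 < s := lt_trans hs₀ hss₀
  have h2δ : 2 * δ ≤ s := by linarith
  set K := C * (2 * (q:ℝ)) ^ s with hK
  have hKpos : 0 < K := mul_pos hC (Real.rpow_pos_of_pos hq2R s)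
  have h2powpos : (0:ℝ) < 2 ^ (2 * q) := by positivity
  refine ⟨K * (2 * (q:ℝ)) * 2 ^ (2 * q),
    mul_pos (mul_pos hKpos hq2R) h2powpos, ?_⟩
  intro Gc hmom hbound u
  set S := u.support with hS
  set f : ℤ → ℝ := fun m => jap m ^ s * ‖u m‖ with hf
  have hfnn : ∀ m, 0 ≤ f m :=
    fun m => mul_nonneg (Real.rpow_nonneg (jap_pos m).le _) (norm_nonneg _)
  have htf : ∑' m, f m = ∑ m ∈ S, f m := by
    apply tsum_eq_sum
    intro m hm
    have : u m = 0 := Finsupp.notMem_support_iff.1 hm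
    simp [hf, this]
  set N := ∑ m ∈ S, f m with hN
  have hNnn : 0 ≤ N := Finset.sum_nonneg fun m _ => hfnn m
  have hrw : (∑' k : ℤ, jap k ^ s * ‖u k‖) = N := htf
  rw [hrw]
  apply tsum_le_of_sum_le'
  · exact mul_nonneg (mul_nonneg (mul_nonneg hKpos.le hq2R.le) h2powpos.le)
      (pow_nonneg hNnn _)
  intro T
  -- the per-monomial summand
  set term : ℤ × ((Fin (2 * q) → ℤ) × (Fin (2 * q) → Bool)) × Fin (2 * q) → ℝ :=
    fun x => jap x.1 ^ (s + δ) * (|Gc x.2.1.1 x.2.1.2| *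
      (if x.2.1.2 x.2.2 = false ∧ x.2.1.1 x.2.2 = x.1 then
        ∏ j ∈ Finset.univ.erase x.2.2, ‖u (x.2.1.1 j)‖ else 0)) with hterm
  have htermnn : ∀ x, 0 ≤ term x := by
    intro x
    apply mul_nonneg (Real.rpow_nonneg (jap_pos _).le _)
    apply mul_nonneg (abs_nonneg _)
    split
    · exact Finset.prod_nonneg fun j _ => norm_nonneg _
    · exact le_rfl
  set Pfull := (Fintype.piFinset fun _ : Fin (2 * q) => T ∪ S) ×ˢ
      (Finset.univ : Finset (Fin (2 * q) → Bool)) with hPfull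
  -- step 1: bound the norm of gradComp by a triple sum
  have hgrad : ∀ k : ℤ, ‖gradComp q Gc u k‖ ≤
      ∑ P ∈ (Fintype.piFinset fun _ : Fin (2 * q) => insert k S) ×ˢ
          (Finset.univ : Finset (Fin (2 * q) → Bool)),
        |Gc P.1 P.2| * ∑ i : Fin (2 * q),
          (if P.2 i = false ∧ P.1 i = k then
            ∏ j ∈ Finset.univ.erase i, ‖u (P.1 j)‖ else 0) := by
    intro k
    rw [gradComp_eq]
    refine (norm_sum_le _ _).trans (Finset.sum_le_sum fun P _ => ?_)
    rw [norm_mul, Complex.norm_real, Real.norm_eq_abs]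
    apply mul_le_mul_of_nonneg_left _ (abs_nonneg _)
    refine (norm_sum_le _ _).trans (le_of_eq ?_)
    apply Finset.sum_congr rfl
    intro i _
    split
    · rw [norm_prod]
      exact Finset.prod_congr rfl fun j _ => norm_pw u _ _
    · simp
  have hstep1 : ∑ k ∈ T, jap k ^ (s + δ) * ‖gradComp q Gc u k‖ ≤
      ∑ k ∈ T, ∑ P ∈ Pfull, ∑ i : Fin (2 * q), term (k, P, i) := by
    apply Finset.sum_le_sum
    intro k hk
    have hsub : (Fintype.piFinset fun _ : Fin (2 * q) => insert k S) ×ˢ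
        (Finset.univ : Finset (Fin (2 * q) → Bool)) ⊆ Pfull := by
      intro P hP
      rw [Finset.mem_product] at hP ⊢
      refine ⟨?_, Finset.mem_univ _⟩
      rw [Fintype.mem_piFinset] at hP ⊢
      intro j
      rcases Finset.mem_insert.1 (hP.1 j) with h | h
      · exact Finset.mem_union_left _ (h ▸ hk)
      · exact Finset.mem_union_right _ h
    calc jap k ^ (s + δ) * ‖gradComp q Gc u k‖
        ≤ jap k ^ (s + δ) * ∑ P ∈ (Fintype.piFinset fun _ : Fin (2 * q) => insert k S) ×ˢ
            (Finset.univ : Finset (Fin (2 * q) → Bool)),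
          |Gc P.1 P.2| * ∑ i : Fin (2 * q),
            (if P.2 i = false ∧ P.1 i = k then
              ∏ j ∈ Finset.univ.erase i, ‖u (P.1 j)‖ else 0) :=
          mul_le_mul_of_nonneg_left (hgrad k) (Real.rpow_nonneg (jap_pos _).le _)
      _ = ∑ P ∈ (Fintype.piFinset fun _ : Fin (2 * q) => insert k S) ×ˢ
            (Finset.univ : Finset (Fin (2 * q) → Bool)),
          ∑ i : Fin (2 * q), term (k, P, i) := by
          rw [Finset.mul_sum]
          refine Finset.sum_congr rfl fun P _ => ?_
          rw [hterm]
          rw [Finset.mul_sum, Finset.mul_sum]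
      _ ≤ ∑ P ∈ Pfull, ∑ i : Fin (2 * q), term (k, P, i) :=
          Finset.sum_le_sum_of_subset_of_nonneg hsub
            (fun P _ _ => Finset.sum_nonneg fun i _ => htermnn _)
  have hflat : ∑ k ∈ T, ∑ P ∈ Pfull, ∑ i : Fin (2 * q), term (k, P, i)
      = ∑ x ∈ T ×ˢ Pfull ×ˢ (Finset.univ : Finset (Fin (2 * q))), term x := by
    rw [Finset.sum_product]
    exact Finset.sum_congr rfl fun k _ =>
      (Finset.sum_product (s := Pfull)
        (t := (Finset.univ : Finset (Fin (2 * q)))) (f := fun y => term (k, y))).symm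
  -- target
  set g : Fin (2 * q) × (Fin (2 * q) → Bool) × (Fin (2 * q) → ℤ) → ℝ :=
    fun y => K * ∏ j : Fin (2 * q),
      (if j = y.1 then (if y.2.2 j = 0 then (1:ℝ) else 0) else f (y.2.2 j)) with hg
  set tgt := (Finset.univ : Finset (Fin (2 * q))) ×ˢ
      (Finset.univ : Finset (Fin (2 * q) → Bool)) ×ˢ
      Fintype.piFinset (fun _ : Fin (2 * q) => insert (0:ℤ) S) with htgtdef
  have hgnn : ∀ y, 0 ≤ g y := by
    intro y
    apply mul_nonneg hKpos.le
    apply Finset.prod_nonneg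
    intro j _
    by_cases h : j = y.1
    · rw [if_pos h]
      split <;> norm_num
    · rw [if_neg h]
      exact hfnn _
  set e : ℤ × ((Fin (2 * q) → ℤ) × (Fin (2 * q) → Bool)) × Fin (2 * q) →
      Fin (2 * q) × (Fin (2 * q) → Bool) × (Fin (2 * q) → ℤ) :=
    fun x => (x.2.2, x.2.1.2, Function.update x.2.1.1 x.2.2 0) with he
  -- pointwise bound term ≤ g ∘ e
  have hle : ∀ x, term x ≤ g (e x) := by
    rintro ⟨k, ⟨ℓ, σ⟩, i⟩
    by_cases hcond : σ i = false ∧ ℓ i = k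
    case neg =>
      have : term (k, (ℓ, σ), i) = 0 := by
        rw [hterm]; dsimp only; rw [if_neg hcond, mul_zero, mul_zero]
      rw [this]
      exact hgnn _
    case pos =>
      obtain ⟨hσi, hℓik⟩ := hcond
      have hgval : g (e (k, (ℓ, σ), i)) = K * ∏ j ∈ Finset.univ.erase i, f (ℓ j) := by
        rw [hg, he]
        dsimp only
        congr 1
        rw [← Finset.mul_prod_erase Finset.univ _ (Finset.mem_univ i)]
        rw [if_pos rfl]; simp only [Function.update_self, eq_self_iff_true, ↓reduceIte, one_mul]
        refine Finset.prod_congr rfl fun j hj => ?_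
        have hji : j ≠ i := (Finset.mem_erase.1 hj).1
        rw [if_neg hji, Function.update_of_ne hji]
      rw [hgval]
      have hkey := key_bound q hq δ s C hδ hs h2δ hC Gc hmom hbound ℓ σ i
      rw [← hK] at hkey
      have htval : term (k, (ℓ, σ), i) =
          jap (ℓ i) ^ (s + δ) * (|Gc ℓ σ| * ∏ j ∈ Finset.univ.erase i, ‖u (ℓ j)‖) := by
        rw [hterm]; dsimp only; rw [if_pos ⟨hσi, hℓik⟩, hℓik]
      rw [htval]
      calc jap (ℓ i) ^ (s + δ) * (|Gc ℓ σ| * ∏ j ∈ Finset.univ.erase i, ‖u (ℓ j)‖)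
          = (jap (ℓ i) ^ (s + δ) * |Gc ℓ σ|) * ∏ j ∈ Finset.univ.erase i, ‖u (ℓ j)‖ := by
            ring
        _ ≤ (K * ∏ j ∈ Finset.univ.erase i, jap (ℓ j) ^ s) *
              ∏ j ∈ Finset.univ.erase i, ‖u (ℓ j)‖ :=
            mul_le_mul_of_nonneg_right hkey
              (Finset.prod_nonneg fun _ _ => norm_nonneg _)
        _ = K * ∏ j ∈ Finset.univ.erase i, (jap (ℓ j) ^ s * ‖u (ℓ j)‖) := by
            rw [mul_assoc, ← Finset.prod_mul_distrib]
        _ = K * ∏ j ∈ Finset.univ.erase i, f (ℓ j) := rfl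
  -- membership
  have hmem : ∀ x ∈ T ×ˢ Pfull ×ˢ (Finset.univ : Finset (Fin (2 * q))),
      term x ≠ 0 → e x ∈ tgt := by
    rintro ⟨k, ⟨ℓ, σ⟩, i⟩ _ hne
    rw [hterm] at hne
    dsimp only at hne
    by_cases hcond : σ i = false ∧ ℓ i = k
    swap
    · rw [if_neg hcond, mul_zero, mul_zero] at hne; exact absurd rfl hne
    rw [if_pos hcond] at hne
    have hprodne : ∏ j ∈ Finset.univ.erase i, ‖u (ℓ j)‖ ≠ 0 := by
      intro h; rw [h, mul_zero, mul_zero] at hne; exact hne rfl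
    have hmemS : ∀ j ∈ Finset.univ.erase i, ℓ j ∈ S := by
      intro j hj
      have hne' := Finset.prod_ne_zero_iff.1 hprodne j hj
      rw [hS]
      exact Finsupp.mem_support_iff.2 (fun h => hne' (by rw [h, norm_zero]))
    rw [htgtdef, he]
    dsimp only
    rw [Finset.mem_product]
    refine ⟨Finset.mem_univ _, ?_⟩
    rw [Finset.mem_product]
    refine ⟨Finset.mem_univ _, ?_⟩
    rw [Fintype.mem_piFinset]
    intro j
    show Function.update ℓ i 0 j ∈ insert (0:ℤ) S
    by_cases hji : j = i
    · rw [hji, Function.update_self]; exact Finset.mem_insert_self _ _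
    · rw [Function.update_of_ne hji]
      exact Finset.mem_insert_of_mem
        (hmemS j (Finset.mem_erase.2 ⟨hji, Finset.mem_univ _⟩))
  -- injectivity
  have hsum_i : ∀ (ℓ : Fin (2 * q) → ℤ) (σ : Fin (2 * q) → Bool) (i : Fin (2 * q)),
      σ i = false → (∑ j, sgn (σ j) * ℓ j) = 0 →
      ℓ i = ∑ j ∈ Finset.univ.erase i, sgn (σ j) * ℓ j := by
    intro ℓ σ i hσi hm
    have h := Finset.add_sum_erase Finset.univ (fun j => sgn (σ j) * ℓ j)
      (Finset.mem_univ i)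
    rw [hm] at h
    have hsgn : sgn (σ i) = -1 := by simp [sgn, hσi]
    simp only [hsgn] at h
    linarith
  have hinj : ∀ x ∈ T ×ˢ Pfull ×ˢ (Finset.univ : Finset (Fin (2 * q))),
      ∀ x' ∈ T ×ˢ Pfull ×ˢ (Finset.univ : Finset (Fin (2 * q))),
      term x ≠ 0 → term x' ≠ 0 → e x = e x' → x = x' := by
    rintro ⟨k, ⟨ℓ, σ⟩, i⟩ _ ⟨k', ⟨ℓ', σ'⟩, i'⟩ _ hne hne' heq
    rw [hterm] at hne hne'
    dsimp only at hne hne'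
    by_cases hcond : σ i = false ∧ ℓ i = k
    swap
    · rw [if_neg hcond, mul_zero, mul_zero] at hne; exact absurd rfl hne
    by_cases hcond' : σ' i' = false ∧ ℓ' i' = k'
    swap
    · rw [if_neg hcond', mul_zero, mul_zero] at hne'; exact absurd rfl hne'
    rw [if_pos hcond] at hne
    rw [if_pos hcond'] at hne'
    have hGne : Gc ℓ σ ≠ 0 := by
      intro h; rw [h, abs_zero, zero_mul, mul_zero] at hne; exact hne rfl
    have hGne' : Gc ℓ' σ' ≠ 0 := by
      intro h; rw [h, abs_zero, zero_mul, mul_zero] at hne'; exact hne' rfl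
    have hm := hmom ℓ σ hGne
    have hm' := hmom ℓ' σ' hGne'
    rw [he] at heq
    dsimp only at heq
    rw [Prod.ext_iff] at heq
    obtain ⟨hi, heq2⟩ := heq
    rw [Prod.ext_iff] at heq2
    obtain ⟨hσeq, hupd⟩ := heq2
    dsimp only at hi hσeq hupd
    subst hi
    subst hσeq
    have hoff : ∀ j : Fin (2 * q), j ≠ i → ℓ j = ℓ' j := by
      intro j hji
      have := congrFun hupd j
      rwa [Function.update_of_ne hji, Function.update_of_ne hji] at this
    have hℓ : ℓ = ℓ' := by
      funext j
      by_cases hji : j = i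
      · subst hji
        have e1 := hsum_i ℓ σ j hcond.1 hm
        have e2 := hsum_i ℓ' σ j hcond'.1 hm'
        rw [e1, e2]
        exact Finset.sum_congr rfl fun m hm'' => by
          rw [hoff m (Finset.mem_erase.1 hm'').1]
      · exact hoff j hji
    subst hℓ
    have hk : k = k' := by rw [← hcond.2, ← hcond'.2]
    subst hk
    rfl
  -- evaluating the target sum
  have hcol : ∀ i : Fin (2 * q), ∀ j : Fin (2 * q),
      (∑ m ∈ insert (0:ℤ) S, (if j = i then (if m = 0 then (1:ℝ) else 0) else f m))
        = if j = i then 1 else N := by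
    intro i j
    by_cases hji : j = i
    · simp only [if_pos hji]
      rw [Finset.sum_ite_eq' (insert (0:ℤ) S) 0 (fun _ => (1:ℝ))]
      rw [if_pos (Finset.mem_insert_self _ _)]
    · simp only [if_neg hji]
      by_cases h0 : (0:ℤ) ∈ S
      · rw [Finset.insert_eq_self.2 h0]
      · rw [Finset.sum_insert h0]
        have hf0 : f 0 = 0 := by
          have : u 0 = 0 := Finsupp.notMem_support_iff.1 h0
          simp [hf, this]
        rw [hf0, zero_add]
  have htgt : ∑ y ∈ tgt, g y
      = (2 * (q:ℝ)) * (2 ^ (2 * q) * (K * N ^ (2 * q - 1))) := by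
    rw [htgtdef]
    rw [Finset.sum_product]
    have hinner : ∀ i : Fin (2 * q),
        ∑ y ∈ (Finset.univ : Finset (Fin (2 * q) → Bool)) ×ˢ
            Fintype.piFinset (fun _ : Fin (2 * q) => insert (0:ℤ) S),
          g (i, y) = 2 ^ (2 * q) * (K * N ^ (2 * q - 1)) := by
      intro i
      rw [Finset.sum_product]
      have hℓsum : ∀ σb : Fin (2 * q) → Bool,
          ∑ ℓ' ∈ Fintype.piFinset (fun _ : Fin (2 * q) => insert (0:ℤ) S),
            g (i, σb, ℓ') = K * N ^ (2 * q - 1) := by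
        intro σb
        rw [hg]
        dsimp only
        rw [← Finset.mul_sum]
        congr 1
        rw [← Finset.prod_univ_sum (fun _ : Fin (2 * q) => insert (0:ℤ) S)
          (fun j m => if j = i then (if m = 0 then (1:ℝ) else 0) else f m)]
        rw [Finset.prod_congr rfl fun (j : Fin (2 * q)) (_ : j ∈ Finset.univ) =>
          hcol i j]
        rw [← Finset.mul_prod_erase Finset.univ _ (Finset.mem_univ i)]
        rw [if_pos rfl, one_mul]
        rw [Finset.prod_congr rfl
          (fun j hj => if_neg (Finset.mem_erase.1 hj).1)]
        rw [Finset.prod_const, Finset.card_erase_of_mem (Finset.mem_univ i),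
          Finset.card_univ, Fintype.card_fin]
      rw [Finset.sum_congr rfl fun σb _ => hℓsum σb]
      rw [Finset.sum_const, Finset.card_univ]
      rw [nsmul_eq_mul]
      congr 1
      rw [Fintype.card_fun]
      simp
    rw [Finset.sum_congr rfl fun i _ => hinner i]
    rw [Finset.sum_const, Finset.card_univ, Fintype.card_fin, nsmul_eq_mul]
    push_cast
    ring
  calc ∑ k ∈ T, jap k ^ (s + δ) * ‖gradComp q Gc u k‖
      ≤ ∑ k ∈ T, ∑ P ∈ Pfull, ∑ i : Fin (2 * q), term (k, P, i) := hstep1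
    _ = ∑ x ∈ T ×ˢ Pfull ×ˢ (Finset.univ : Finset (Fin (2 * q))), term x := hflat
    _ ≤ ∑ y ∈ tgt, g y :=
        sum_le_sum_inj _ tgt e term g hgnn (fun x _ => hle x) hmem hinj
    _ = (2 * (q:ℝ)) * (2 ^ (2 * q) * (K * N ^ (2 * q - 1))) := htgt
    _ = K * (2 * (q:ℝ)) * 2 ^ (2 * q) * N ^ (2 * q - 1) := by ring
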